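/- arXiv:2403.13120 — 4 statements merged into one kernel-verified Lean document; each statement's English description precedes it below -/
import Mathlib

section
/- Let S : ℕ₀ × ℕ₀ → ℤ be a function with S(g, h) = 0 for h > g + 1, and let T_S be defined by the recursion T_S(g, h) = T_S(g, h+1) + T_S(g−1, h+1) + S(g, h) for g ≥ 1, h ≥ 0, with T_S(g, h) = 0 whenever h > g + 1. Then T_S(g, h) = Σ_{x,y ≥ 0} C(y − h, g − x) · S(x, y), where C(n, k) = 0 when k < 0 or k > n. -/
/-!
Extend `C(a, b)` to all integers by zero. Pascal's rule then holds everywhere up to a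
Kronecker delta: `C(a, b) = C(a-1, b) + C(a-1, b-1) + [a = b = 0]`. Applied with
`a = y - h`, `b = g - x`, it shows that the double sum satisfies the recursion of `T`, the
delta producing the term `S g h`; it also vanishes for `h > g + 1`. The difference of `T` and
the sum thus satisfies the homogeneous recursion and vanishes above the line `h = g + 1`, so it
vanishes on the quadrant by induction on `g + 2 - h`.
-/

/-- The binomial coefficient `C(a, b)` for integer arguments, with the convention that
it is `0` when `b < 0` or `b > a`. -/
def intChoose (a b : ℤ) : ℕ :=
  if 0 ≤ b ∧ b ≤ a then a.toNat.choose b.toNat else 0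

lemma intChoose_eq_zero {a b : ℤ} (h : b < 0 ∨ a < b) : intChoose a b = 0 :=
  if_neg (by omega)

@[simp]
lemma intChoose_natCast (n k : ℕ) : intChoose n k = n.choose k := by
  unfold intChoose
  split_ifs with h
  · simp
  · exact (Nat.choose_eq_zero_of_lt (by omega)).symm

lemma intChoose_zero_right {a : ℤ} (ha : 0 ≤ a) : intChoose a 0 = 1 := by
  simp [intChoose, ha]

lemma intChoose_pascal (a b : ℤ) :
    (intChoose a b : ℤ) = intChoose (a - 1) b + intChoose (a - 1) (b - 1)
      + if a = 0 ∧ b = 0 then 1 else 0 := by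
  by_cases hab : b < 0 ∨ a < b
  · rw [intChoose_eq_zero hab, intChoose_eq_zero (by omega), intChoose_eq_zero (by omega),
      if_neg (by omega)]
    simp
  by_cases hb : b = 0
  · subst hb
    by_cases ha : a = 0
    · simp [ha, intChoose_zero_right, intChoose_eq_zero]
    · rw [intChoose_zero_right (by omega), intChoose_zero_right (by omega),
        intChoose_eq_zero (by omega), if_neg (by omega)]
      simp
  obtain ⟨n, rfl⟩ : ∃ n : ℕ, a = n + 1 := ⟨(a - 1).toNat, by omega⟩
  obtain ⟨k, rfl⟩ : ∃ k : ℕ, b = k + 1 := ⟨(b - 1).toNat, by omega⟩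
  rw [if_neg (by omega), add_sub_cancel_right, add_sub_cancel_right, ← Nat.cast_succ,
    ← Nat.cast_succ]
  simp only [intChoose_natCast, Nat.choose_succ_succ']
  push_cast
  ring

open Finset

noncomputable def binomialSum (S : ℕ → ℕ → ℤ) (g h : ℤ) : ℤ :=
  ∑' x : ℕ, ∑' y : ℕ, (intChoose ((y : ℤ) - h) (g - x) : ℤ) * S x y

lemma tsum_tsum_eq_sum_range_product {M : Type*} [AddCommMonoid M] [TopologicalSpace M]
    [T2Space M] (f : ℕ → ℕ → M) (N : ℕ) (hf : ∀ x y, N ≤ x ∨ N ≤ y → f x y = 0) :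
    ∑' x, ∑' y, f x y = ∑ p ∈ range N ×ˢ range N, f p.1 p.2 := by
  rw [sum_product, tsum_eq_sum (s := range N)]
  · exact sum_congr rfl fun x _ => tsum_eq_sum fun y hy => hf x y (by simp_all)
  · intro x hx
    simp_all

section

variable {S : ℕ → ℕ → ℤ}

lemma binomialSum_eq_sum (hS : ∀ g h : ℕ, (h : ℤ) > g + 1 → S g h = 0) {g : ℤ} (h : ℤ)
    {N : ℕ} (hN : g + 2 ≤ N) :
    binomialSum S g h = ∑ p ∈ range N ×ˢ range N,
      (intChoose ((p.2 : ℤ) - h) (g - p.1) : ℤ) * S p.1 p.2 := by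
  refine tsum_tsum_eq_sum_range_product _ N fun x y hxy => ?_
  by_cases hx : (x : ℤ) ≤ g
  · rw [hS x y (by omega), mul_zero]
  · rw [intChoose_eq_zero (by omega), Nat.cast_zero, zero_mul]

lemma binomialSum_eq_zero (hS : ∀ g h : ℕ, (h : ℤ) > g + 1 → S g h = 0) {g h : ℤ}
    (hgh : g + 1 < h) : binomialSum S g h = 0 := by
  rw [binomialSum_eq_sum hS h (N := g.toNat + 2) (by omega)]
  refine sum_eq_zero fun ⟨x, y⟩ _ => ?_
  by_cases hy : (y : ℤ) ≤ x + 1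
  · rw [intChoose_eq_zero (by omega), Nat.cast_zero, zero_mul]
  · rw [hS x y (by omega), mul_zero]

lemma binomialSum_rec (hS : ∀ g h : ℕ, (h : ℤ) > g + 1 → S g h = 0) {g h : ℤ}
    (hg : 0 ≤ g) (hh : 0 ≤ h) :
    binomialSum S g h = binomialSum S g (h + 1) + binomialSum S (g - 1) (h + 1)
      + S g.toNat h.toNat := by
  set N := g.toNat + h.toNat + 2
  have hmem : (g.toNat, h.toNat) ∈ range N ×ˢ range N := by
    simp only [mem_product, mem_range]
    omega
  rw [binomialSum_eq_sum hS h (N := N) (by omega),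
    binomialSum_eq_sum hS (h + 1) (N := N) (by omega),
    binomialSum_eq_sum hS (h + 1) (N := N) (by omega), ← sum_add_distrib,
    ← sum_ite_eq_of_mem' _ _ (fun p => S p.1 p.2) hmem, ← sum_add_distrib]
  refine sum_congr rfl fun ⟨x, y⟩ _ => ?_
  have hδ : ((y : ℤ) - h = 0 ∧ g - x = 0) ↔ (x, y) = (g.toNat, h.toNat) := by
    simp only [Prod.mk.injEq]
    omega
  dsimp only
  rw [intChoose_pascal, show (y : ℤ) - h - 1 = y - (h + 1) by ring,
    show g - x - 1 = g - 1 - x by ring]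
  simp only [hδ, add_mul, ite_mul, one_mul, zero_mul]

end

theorem eq_zero_of_pascal_rec (D : ℤ → ℤ → ℤ)
    (hD0 : ∀ g h : ℤ, g + 1 < h → D g h = 0)
    (hrec : ∀ g h : ℤ, 0 ≤ g → 0 ≤ h → D g h = D g (h + 1) + D (g - 1) (h + 1))
    {g h : ℤ} (hg : 0 ≤ g) (hh : 0 ≤ h) : D g h = 0 := by
  by_cases hgh : g + 1 < h
  · exact hD0 g h hgh
  have hright : D g (h + 1) = 0 :=
    eq_zero_of_pascal_rec D hD0 hrec hg (by omega)
  have hdiag : D (g - 1) (h + 1) = 0 := by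
    by_cases hg0 : g = 0
    · exact hD0 _ _ (by omega)
    · exact eq_zero_of_pascal_rec D hD0 hrec (by omega) (by omega)
  rw [hrec g h hg hh, hright, hdiag, add_zero]
termination_by (g + 2 - h).toNat

/-- Let `S : ℕ × ℕ → ℤ` vanish for `h > g + 1`, and let `T` satisfy the recursion
`T g h = T g (h+1) + T (g-1) (h+1) + S g h` for `g ≥ 0`, `h ≥ 0`, with the boundary
condition `T g h = 0` whenever `h > g + 1` (for all integers `g`, `h`).  Then
`T g h = Σ_{x,y ≥ 0} C(y - h, g - x) ⬝ S x y`. -/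
theorem T_eq_sum_intChoose (S : ℕ → ℕ → ℤ)
    (hS : ∀ g h : ℕ, (h : ℤ) > g + 1 → S g h = 0)
    (T : ℤ → ℤ → ℤ)
    (hT0 : ∀ g h : ℤ, h > g + 1 → T g h = 0)
    (hTrec : ∀ g h : ℤ, 0 ≤ g → 0 ≤ h →
      T g h = T g (h + 1) + T (g - 1) (h + 1) + S g.toNat h.toNat) :
    ∀ g h : ℕ, T g h = ∑' x : ℕ, ∑' y : ℕ,
      (intChoose ((y : ℤ) - h) ((g : ℤ) - x) : ℤ) * S x y := by
  intro g h
  have hdiff := eq_zero_of_pascal_rec (fun g h => T g h - binomialSum S g h)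
    (fun g h hgh => by rw [hT0 g h hgh, binomialSum_eq_zero hS hgh, sub_zero])
    (fun g h hg hh => by rw [hTrec g h hg hh, binomialSum_rec hS hg hh]; ring)
    (Int.natCast_nonneg g) (Int.natCast_nonneg h)
  exact sub_eq_zero.mp hdiff
end

section
/- If g ≥ 0, h ≥ 0 and h ≥ g + 2, then there are no numerical semigroups of genus g with efficacy h; moreover the only numerical semigroups with efficacy h = g + 1 are the semigroups {0} ∪ [m, ∞) with m = g + 1. -/
/-!
Let `m` be the multiplicity (least positive element) of `Λ` and `f` its Frobenius number.
An effective generator `x > f + m` is impossible, since `x = m + (x - m)` with both summands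
in `Λ \ {x}`; so all effective generators lie in `(f, f + m]` and `h ≤ m`. On the other hand
`1, …, m - 1` are gaps, so `m ≤ g + 1`, and equality forces the gaps to be exactly `[1, m)`.
-/

/-- A numerical semigroup: a set of nonnegative integers containing 0, closed under
addition, with finite complement. -/
def IsNumericalSemigroup (Λ : Set ℕ) : Prop :=
  0 ∈ Λ ∧ (∀ a ∈ Λ, ∀ b ∈ Λ, a + b ∈ Λ) ∧ Λᶜ.Finite

/-- The Frobenius number: the largest nonnegative integer not in `Λ`. -/
noncomputable def frob (Λ : Set ℕ) : ℕ := sSup Λᶜ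

/-- The genus: the number of gaps of `Λ`. -/
noncomputable def genus (Λ : Set ℕ) : ℕ := Λᶜ.ncard

/-- The efficacy: the number of `x > f(Λ)` such that `Λ \ {x}` is closed under
addition. -/
noncomputable def efficacy (Λ : Set ℕ) : ℕ :=
  {x : ℕ | frob Λ < x ∧ ∀ a ∈ Λ \ {x}, ∀ b ∈ Λ \ {x}, a + b ∈ Λ \ {x}}.ncard

namespace NumericalSemigroup

noncomputable def multiplicity (Λ : Set ℕ) : ℕ := sInf {n : ℕ | n ∈ Λ ∧ 0 < n}

variable {Λ : Set ℕ}

theorem mem_of_frob_lt (hfin : Λᶜ.Finite) {n : ℕ} (hn : frob Λ < n) : n ∈ Λ := by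
  by_contra hnot
  exact (le_csSup hfin.bddAbove hnot).not_gt hn

theorem multiplicity_le {k : ℕ} (hk : k ∈ Λ) (hk0 : 0 < k) : multiplicity Λ ≤ k :=
  Nat.sInf_le ⟨hk, hk0⟩

theorem multiplicity_mem_and_pos (hfin : Λᶜ.Finite) :
    multiplicity Λ ∈ Λ ∧ 0 < multiplicity Λ := by
  have hinf : Λ.Infinite := by simpa using hfin.infinite_compl
  obtain ⟨p, hpΛ, hp0⟩ := hinf.exists_gt 0
  exact Nat.sInf_mem (s := {n : ℕ | n ∈ Λ ∧ 0 < n}) ⟨p, hpΛ, hp0⟩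

theorem Ico_one_multiplicity_subset_compl : Set.Ico 1 (multiplicity Λ) ⊆ Λᶜ :=
  fun _ hk hkΛ => (multiplicity_le hkΛ hk.1).not_gt hk.2

theorem multiplicity_le_genus_add_one (hfin : Λᶜ.Finite) : multiplicity Λ ≤ genus Λ + 1 := by
  have := Set.ncard_le_ncard Ico_one_multiplicity_subset_compl hfin
  rw [Set.ncard_Ico_nat] at this
  exact Nat.le_add_of_sub_le this

theorem compl_eq_Ico_one_multiplicity (hfin : Λᶜ.Finite)
    (h : multiplicity Λ = genus Λ + 1) : Λᶜ = Set.Ico 1 (multiplicity Λ) := by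
  refine (Set.eq_of_subset_of_ncard_le Ico_one_multiplicity_subset_compl ?_ hfin).symm
  rw [Set.ncard_Ico_nat, h, genus]
  omega

theorem le_frob_add_multiplicity_of_effective (hΛ : IsNumericalSemigroup Λ) {x : ℕ}
    (hx : ∀ a ∈ Λ \ {x}, ∀ b ∈ Λ \ {x}, a + b ∈ Λ \ {x}) : x ≤ frob Λ + multiplicity Λ := by
  obtain ⟨hm, hm0⟩ := multiplicity_mem_and_pos hΛ.2.2
  by_contra! hlt
  have hm' : multiplicity Λ ∈ Λ \ {x} := Set.mem_sdiff_singleton.2 ⟨hm, by omega⟩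
  have hsub : x - multiplicity Λ ∈ Λ \ {x} :=
    Set.mem_sdiff_singleton.2 ⟨mem_of_frob_lt hΛ.2.2 (by omega), by omega⟩
  exact (Set.mem_sdiff_singleton.1 (hx _ hm' _ hsub)).2 (by omega)

theorem efficacy_le_multiplicity (hΛ : IsNumericalSemigroup Λ) :
    efficacy Λ ≤ multiplicity Λ := by
  have hsub : {x : ℕ | frob Λ < x ∧ ∀ a ∈ Λ \ {x}, ∀ b ∈ Λ \ {x}, a + b ∈ Λ \ {x}} ⊆
      Set.Ioc (frob Λ) (frob Λ + multiplicity Λ) :=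
    fun x hx => ⟨hx.1, le_frob_add_multiplicity_of_effective hΛ hx.2⟩
  have := Set.ncard_le_ncard hsub (Set.finite_Ioc _ _)
  rwa [Set.ncard_Ioc_nat, Nat.add_sub_cancel_left] at this

end NumericalSemigroup

/-- There are no numerical semigroups of genus `g` with efficacy `h ≥ g + 2`, and the
only numerical semigroup of genus `g` with efficacy `g + 1` is `{0} ∪ [g+1, ∞)`. -/
theorem efficacy_le_genus_add_one (Λ : Set ℕ) (hΛ : IsNumericalSemigroup Λ) :
    (genus Λ + 2 ≤ efficacy Λ → False) ∧
      (efficacy Λ = genus Λ + 1 → Λ = {0} ∪ {n : ℕ | genus Λ + 1 ≤ n}) := by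
  have hhm := NumericalSemigroup.efficacy_le_multiplicity hΛ
  have hmg := NumericalSemigroup.multiplicity_le_genus_add_one hΛ.2.2
  refine ⟨fun hge => by omega, fun heq => ?_⟩
  have hm : NumericalSemigroup.multiplicity Λ = genus Λ + 1 := by omega
  have hcompl := NumericalSemigroup.compl_eq_Ico_one_multiplicity hΛ.2.2 hm
  ext n
  rw [← Set.notMem_compl_iff, hcompl, hm]
  simp only [Set.mem_Ico, Set.mem_union, Set.mem_singleton_iff, Set.mem_ofPred_eq]
  omega
end

section
/- Let r : ℤ → ℕ be defined by r(n) = s(2n+1, n+1) for n ≥ 1, r(0) = r(−1) = 1, r(n) = 0 for n ≤ −2, and suppose Σ_{n≥1} φ^{−n} r(n) converges. Let w(n) = Σ_{−1 ≤ k ≤ n} F_{n−k+1} r(k). Then with C = (1/√5) Σ_{k ≥ −1} r(k) φ^{1−k}, one has w(n) = C φ^n + o(φ^n) as n → ∞. -/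
open Filter

/-- Let `r : ℤ → ℝ` be nonnegative, vanish for `n ≤ -2`, and satisfy that
`Σ_{n ≥ 1} φ⁻ⁿ r n` converges.  Let `w n = Σ_{-1 ≤ k ≤ n} F (n - k + 1) * r k`.  Then
with `C = (1/√5) Σ_{k ≥ -1} r k * φ^(1-k)`, one has `w n = C φⁿ + o(φⁿ)` as `n → ∞`,
where `φ = (1+√5)/2` is the golden ratio. -/
theorem w_asymptotic (φ : ℝ) (hφ : φ = (1 + Real.sqrt 5) / 2)
    (r : ℤ → ℝ) (hr : ∀ n : ℤ, 0 ≤ r n) (hr0 : ∀ n : ℤ, n ≤ -2 → r n = 0)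
    (hsum : Summable fun n : ℕ => r n / φ ^ n)
    (w : ℤ → ℝ)
    (hw : ∀ n : ℤ, w n = ∑ k ∈ Finset.Icc (-1 : ℤ) n,
      (Nat.fib (n - k + 1).toNat : ℝ) * r k)
    (C : ℝ)
    (hC : C = (1 / Real.sqrt 5) * ∑' j : ℕ, r ((j : ℤ) - 1) * φ ^ (2 - (j : ℤ))) :
    (fun n : ℕ => w n - C * φ ^ n) =o[atTop] fun n : ℕ => φ ^ n := by
  rw [show (1 + Real.sqrt 5)/2 = Real.goldenRatio from rfl] at hφ
  subst hφ
  set G : ℝ := Real.goldenRatio with hG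
  have hGpos : (0:ℝ) < G := Real.goldenRatio_pos
  have hG1 : (1:ℝ) < G := Real.one_lt_goldenRatio
  have hGne : G ≠ 0 := ne_of_gt hGpos
  have habs : |Real.goldenConj| = G⁻¹ := by rw [abs_of_neg Real.goldenConj_neg, ← Real.inv_goldenRatio]
  have hs5 : (0:ℝ) < Real.sqrt 5 := Real.sqrt_pos.mpr (by norm_num)
  -- the sequence c
  set c : ℕ → ℝ := fun j => r ((j : ℤ) - 1) / G ^ j with hcdef
  have hc : Summable c := by
    rw [← summable_nat_add_iff 1]
    have : (fun n : ℕ => c (n + 1)) = fun n : ℕ => G⁻¹ * (r n / G ^ n) := by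
      funext n
      have h1 : ((n + 1 : ℕ) : ℤ) - 1 = (n : ℤ) := by push_cast; ring
      simp only [hcdef, h1, pow_succ]
      field_simp
    rw [this]
    exact hsum.mul_left _
  set T : ℝ := ∑' j, c j with hT
  have hcnonneg : ∀ j, 0 ≤ c j := fun j => div_nonneg (hr _) (by positivity)
  -- rewrite C
  have hCeq : C = (1 / Real.sqrt 5) * (G ^ 2 * T) := by
    rw [hC]
    congr 1
    rw [← tsum_mul_left]
    congr 1
    funext j
    have : G ^ ((2:ℤ) - (j:ℤ)) = G ^ 2 / G ^ j := by
      rw [zpow_sub₀ hGne, zpow_natCast]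
      norm_cast
    rw [this, hcdef]
    ring
  -- rewrite w
  have hwn : ∀ n : ℕ, w n = ∑ j ∈ Finset.range (n + 2),
      (Nat.fib (n + 2 - j) : ℝ) * r ((j : ℤ) - 1) := by
    intro n
    rw [hw]
    have hmap : Finset.Icc (-1 : ℤ) (n : ℤ) =
        (Finset.range (n + 2)).map ⟨fun j : ℕ => (j : ℤ) - 1, fun a b h => by dsimp at h; omega⟩ := by
      ext x
      simp only [Finset.mem_Icc, Finset.mem_map, Finset.mem_range,
        Function.Embedding.coeFn_mk]
      constructor
      · intro hx
        exact ⟨(x + 1).toNat, by omega, by change (((x + 1).toNat : ℕ) : ℤ) - 1 = x; omega⟩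
      · rintro ⟨a, ha, rfl⟩; change -1 ≤ (a : ℤ) - 1 ∧ (a : ℤ) - 1 ≤ n; omega
    rw [hmap, Finset.sum_map]
    refine Finset.sum_congr rfl fun j hj => ?_
    simp only [Finset.mem_range] at hj
    have : ((n : ℤ) - ((j : ℤ) - 1) + 1).toNat = n + 2 - j := by omega
    change (Nat.fib ((n : ℤ) - ((j : ℤ) - 1) + 1).toNat : ℝ) * r ((j : ℤ) - 1) = _; rw [this]
  -- partial sums and the ψ-error term
  set S : ℕ → ℝ := fun n => ∑ j ∈ Finset.range (n + 2), c j with hS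
  set E : ℕ → ℝ := fun n => ∑ j ∈ Finset.range (n + 2),
      Real.goldenConj ^ (n + 2 - j) * r ((j : ℤ) - 1) with hE
  have hkey : ∀ n : ℕ, w n - C * G ^ n =
      (1 / Real.sqrt 5) * (G ^ (n + 2) * (S n - T)) - (1 / Real.sqrt 5) * E n := by
    intro n
    rw [hwn n, hCeq]
    have h1 : ∑ j ∈ Finset.range (n + 2), (Nat.fib (n + 2 - j) : ℝ) * r ((j : ℤ) - 1)
        = (1 / Real.sqrt 5) * (G ^ (n + 2) * S n) - (1 / Real.sqrt 5) * E n := by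
      rw [hS, hE, Finset.mul_sum, Finset.mul_sum, Finset.mul_sum, ← Finset.sum_sub_distrib]
      refine Finset.sum_congr rfl fun j hj => ?_
      simp only [Finset.mem_range] at hj
      have hle : j ≤ n + 2 := by omega
      rw [Real.coe_fib_eq, pow_sub₀ G hGne hle, hcdef]
      field_simp
    rw [h1]
    ring
  -- pass to the quotient
  have hne : ∀ n : ℕ, G ^ n ≠ 0 := fun n => pow_ne_zero n hGne
  rw [Asymptotics.isLittleO_iff_tendsto fun n h => absurd h (hne n)]
  have heq : (fun n : ℕ => (w n - C * G ^ n) / G ^ n) =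
      fun n : ℕ => (1 / Real.sqrt 5) * (G ^ 2 * (S n - T)) -
        (1 / Real.sqrt 5) * (E n / G ^ n) := by
    funext n
    rw [hkey n]
    field_simp
    ring
  rw [heq]
  have hzero : (0:ℝ) = (1 / Real.sqrt 5) * (G ^ 2 * 0) - (1 / Real.sqrt 5) * 0 := by ring
  rw [hzero]
  refine Tendsto.sub (Tendsto.const_mul _ (Tendsto.const_mul _ ?_)) (Tendsto.const_mul _ ?_)
  · -- S n - T → 0
    have h1 : Tendsto (fun m : ℕ => ∑ j ∈ Finset.range m, c j) atTop (nhds T) :=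
      hc.hasSum.tendsto_sum_nat
    have h2 : Tendsto S atTop (nhds T) := h1.comp (tendsto_add_atTop_nat 2)
    have := h2.sub (tendsto_const_nhds (x := T))
    simpa using this
  · -- E n / G^n → 0
    set q : ℝ := G⁻¹ ^ 2 with hq
    set a : ℕ → ℝ := fun m => ∑ j ∈ Finset.range (m + 1), c j * q ^ (m - j) with ha
    have hsq : Summable fun m => ‖a m‖ := by
      apply summable_norm_sum_mul_range_of_summable_norm (f := c) (g := fun m => q ^ m)
      · exact hc.abs
      · apply Summable.abs
        apply summable_geometric_of_lt_one (by positivity)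
        rw [hq]
        exact pow_lt_one₀ (by positivity) (inv_lt_one_of_one_lt₀ hG1) two_ne_zero
    have hatend : Tendsto a atTop (nhds 0) := hsq.of_norm.tendsto_atTop_zero
    apply squeeze_zero_norm (a := fun n => a (n + 1))
    · intro n
      have hEbound : |E n| ≤ ∑ j ∈ Finset.range (n + 2),
          G⁻¹ ^ (n + 2 - j) * r ((j : ℤ) - 1) := by
        refine (Finset.abs_sum_le_sum_abs _ _).trans ?_
        refine Finset.sum_le_sum fun j hj => ?_
        rw [abs_mul, abs_pow, habs, abs_of_nonneg (hr _)]
      have hstep : ∀ j ∈ Finset.range (n + 2),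
          G⁻¹ ^ (n + 2 - j) * r ((j : ℤ) - 1) * G⁻¹ ^ n = c j * q ^ (n + 1 - j) := by
        intro j hj
        simp only [Finset.mem_range] at hj
        have h1 : G⁻¹ ^ (n + 2 - j) * G⁻¹ ^ n = G⁻¹ ^ (j + 2 * (n + 1 - j)) := by
          rw [← pow_add]; congr 1; omega
        calc G⁻¹ ^ (n + 2 - j) * r ((j : ℤ) - 1) * G⁻¹ ^ n
            = r ((j : ℤ) - 1) * (G⁻¹ ^ (n + 2 - j) * G⁻¹ ^ n) := by ring
          _ = r ((j : ℤ) - 1) * (G⁻¹ ^ j * (G⁻¹ ^ 2) ^ (n + 1 - j)) := by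
              rw [h1, pow_add, pow_mul]
          _ = c j * q ^ (n + 1 - j) := by
              simp only [hcdef, hq, div_eq_mul_inv, mul_assoc, inv_pow]
      calc ‖E n / G ^ n‖ = |E n| * G⁻¹ ^ n := by
            rw [Real.norm_eq_abs, abs_div, abs_pow, abs_of_pos hGpos, div_eq_mul_inv, inv_pow]
        _ ≤ (∑ j ∈ Finset.range (n + 2), G⁻¹ ^ (n + 2 - j) * r ((j : ℤ) - 1)) * G⁻¹ ^ n := by
            exact mul_le_mul_of_nonneg_right hEbound (by positivity)
        _ = ∑ j ∈ Finset.range (n + 2), G⁻¹ ^ (n + 2 - j) * r ((j : ℤ) - 1) * G⁻¹ ^ n := by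
            rw [Finset.sum_mul]
        _ = ∑ j ∈ Finset.range (n + 2), c j * q ^ (n + 1 - j) :=
            Finset.sum_congr rfl hstep
        _ = a (n + 1) := rfl
    · exact hatend.comp (tendsto_add_atTop_nat 1)
end

section
/- For all nonnegative integers x, y, the binomial coefficient C(x, y) satisfies C(x, y) ≤ F_{x+y+1} ≤ φ^{x+y}, where φ = (1+√5)/2 and F_n is the n-th Fibonacci number. -/
open Real goldenRatio

lemma fib_le_gold_pow : ∀ n : ℕ, (Nat.fib (n + 1) : ℝ) ≤ goldenRatio ^ n
  | 0 => by norm_num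
  | 1 => by
      simp [goldenRatio]
      nlinarith [Real.sq_sqrt (by norm_num : (5:ℝ) ≥ 0), Real.sqrt_nonneg 5]
  | (n + 2) => by
      have h1 := fib_le_gold_pow n
      have h2 := fib_le_gold_pow (n + 1)
      have hsq : goldenRatio ^ (n + 2) = goldenRatio ^ (n+1) + goldenRatio ^ n := by
        calc goldenRatio ^ (n + 2) = goldenRatio ^ 2 * goldenRatio ^ n := by ring
        _ = (goldenRatio + 1) * goldenRatio ^ n := by rw [goldenRatio_sq]
        _ = goldenRatio ^ (n+1) + goldenRatio ^ n := by ring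
      rw [Nat.fib_add_two]
      push_cast
      rw [hsq]
      linarith

/-- For all nonnegative integers `x, y`, the binomial coefficient `C(x, y)` satisfies
`C(x, y) ≤ F (x + y + 1) ≤ φ^(x+y)`, where `φ = (1+√5)/2`. -/
theorem choose_le_fib_le_goldenRatio_pow (x y : ℕ) :
    Nat.choose x y ≤ Nat.fib (x + y + 1) ∧
      (Nat.fib (x + y + 1) : ℝ) ≤ ((1 + Real.sqrt 5) / 2) ^ (x + y) := by
  constructor
  · rw [Nat.fib_succ_eq_sum_choose]
    exact Finset.single_le_sum (f := fun p : ℕ × ℕ => Nat.choose p.1 p.2)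
      (fun _ _ => Nat.zero_le _) (a := (x, y)) (Finset.HasAntidiagonal.mem_antidiagonal.mpr rfl)
  · exact fib_le_gold_pow (x + y)
end
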